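/- Suppose a weight ω on the Grigorchuk group satisfies: there exist constants K ≥ 0 and η with 1 < η < 4 such that ∂_ω(h) ≤ η·max{∂_ω(h₀), ∂_ω(h₁)} + K for all h in the first-level stabilizer H (where ψ(h)=(h₀,h₁)). Then the growth function of G satisfies γ(n) ≿ e^{n^α} with α = log 2 / log η > 1/2; i.e., there exist constants C, c > 0 such that γ(Cn) ≥ e^{c·n^α} for all sufficiently large n. -/

import Mathlib

/-- The generator `a` of the Grigorchuk group, acting on finite binary sequences. -/
def grigA : List Bool → List Bool
  | [] => []
  | x :: σ => (!x) :: σ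

mutual
  /-- The generator `b` of the Grigorchuk group. -/
  def grigB : List Bool → List Bool
    | [] => []
    | false :: σ => false :: grigA σ
    | true :: σ => true :: grigC σ
  /-- The generator `c` of the Grigorchuk group. -/
  def grigC : List Bool → List Bool
    | [] => []
    | false :: σ => false :: grigA σ
    | true :: σ => true :: grigD σ
  /-- The generator `d` of the Grigorchuk group. -/
  def grigD : List Bool → List Bool
    | [] => []
    | false :: σ => false :: σ
    | true :: σ => true :: grigB σ
end

theorem grigA_involutive : Function.Involutive grigA := by
  intro l
  rcases l with _ | ⟨x, σ⟩
  · rfl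
  · cases x <;> rfl

theorem grigBCD_involutive :
    ∀ l : List Bool, grigB (grigB l) = l ∧ grigC (grigC l) = l ∧ grigD (grigD l) = l := by
  intro l
  induction l with
  | nil => exact ⟨rfl, rfl, rfl⟩
  | cons x σ ih =>
      cases x <;>
        simp [grigB, grigC, grigD, grigA_involutive σ, ih.1, ih.2.1, ih.2.2]

theorem grigB_involutive : Function.Involutive grigB := fun l => (grigBCD_involutive l).1
theorem grigC_involutive : Function.Involutive grigC := fun l => (grigBCD_involutive l).2.1
theorem grigD_involutive : Function.Involutive grigD := fun l => (grigBCD_involutive l).2.2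

/-- The generator `a` as a permutation of binary sequences. -/
def aP : Equiv.Perm (List Bool) := grigA_involutive.toPerm
/-- The generator `b` as a permutation of binary sequences. -/
def bP : Equiv.Perm (List Bool) := grigB_involutive.toPerm
/-- The generator `c` as a permutation of binary sequences. -/
def cP : Equiv.Perm (List Bool) := grigC_involutive.toPerm
/-- The generator `d` as a permutation of binary sequences. -/
def dP : Equiv.Perm (List Bool) := grigD_involutive.toPerm

/-- The Grigorchuk group, as the group of permutations of finite binary sequences
generated by `a`, `b`, `c`, `d`. -/
def Grig : Subgroup (Equiv.Perm (List Bool)) := Subgroup.closure {aP, bP, cP, dP}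

/-- `a` as an element of the Grigorchuk group. -/
def ga : Grig := ⟨aP, Subgroup.subset_closure (by simp)⟩
/-- `b` as an element of the Grigorchuk group. -/
def gb : Grig := ⟨bP, Subgroup.subset_closure (by simp)⟩
/-- `c` as an element of the Grigorchuk group. -/
def gc : Grig := ⟨cP, Subgroup.subset_closure (by simp)⟩
/-- `d` as an element of the Grigorchuk group. -/
def gd : Grig := ⟨dP, Subgroup.subset_closure (by simp)⟩

/-- A permutation of binary sequences preserves the first letter. -/
def FixesFirst (g : Equiv.Perm (List Bool)) : Prop :=
  ∀ (x : Bool) (σ : List Bool), ∃ σ' : List Bool, g (x :: σ) = x :: σ'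
/-- The weight (norm) on a group `G` induced by a weight function `ω` on a generating set
`S`: the infimum of the total weights of words over `S` representing `g`. -/
noncomputable def wordWeight {G : Type*} [Group G] (S : Set G) (ω : G → ℝ) (g : G) : ℝ :=
  sInf ((fun l : List G => (l.map ω).sum) '' {l : List G | (∀ s ∈ l, s ∈ S) ∧ l.prod = g})

/-- The growth function of `G` with respect to the generating set `S` and weight `ω`:
the number of elements of weight at most `x`. -/
noncomputable def growth {G : Type*} [Group G] (S : Set G) (ω : G → ℝ) (x : ℝ) : ℕ :=
  Nat.card {g : G | wordWeight S ω g ≤ x}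

/-- The word length of `g` with respect to the generating set `S`. -/
noncomputable def wordLength {G : Type*} [Group G] (S : Set G) (g : G) : ℕ :=
  sInf {n : ℕ | ∃ l : List G, (∀ s ∈ l, s ∈ S) ∧ l.prod = g ∧ l.length = n}

/-- The defining property of the subtree-decomposition map `ψ : H → G × G`:
`h(0σ) = 0·h₀(σ)` and `h(1σ) = 1·h₁(σ)` where `ψ(h) = (h₀, h₁)`. -/
def PsiProp (H : Subgroup Grig) (ψ : H →* Grig × Grig) : Prop :=
  ∀ (h : H) (σ : List Bool),
    ((h : Grig) : Equiv.Perm (List Bool)) (false :: σ) =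
        false :: (((ψ h).1 : Grig) : Equiv.Perm (List Bool)) σ ∧
    ((h : Grig) : Equiv.Perm (List Bool)) (true :: σ) =
        true :: (((ψ h).2 : Grig) : Equiv.Perm (List Bool)) σ

/-!
Let `grigK` be the normal closure of `(ab)²` in `G`. The two coordinates of `ψ` are onto, and
`ψ` takes elements of `H ∩ grigK` to `(1, (ab)²)` and `((ab)², 1)`; conjugating these shows that
`ψ (H ∩ grigK)` contains `grigK × grigK`. So, starting from `{1, (ab)²}` and replacing a finite
set `F ⊆ grigK` by one `ψ`-preimage of each pair in `F × F`, after `k` steps we have `2 ^ 2 ^ k`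
elements of `grigK`, and the contraction inequality bounds their weights by `A η ^ k - B`, where
`B = K / (η - 1)` is the fixed point of `x ↦ η x + K`. Taking `k = ⌊log_η n⌋` and using
`η ^ α = 2` gives `γ(A n) ≥ 2 ^ 2 ^ k ≥ exp ((log 2 / 2) n ^ α)`.
-/

section Real

open Real

theorem one_half_lt_log_two_div_log {η : ℝ} (hη : 1 < η) (hη4 : η < 4) :
    1 / 2 < log 2 / log η := by
  have hlog4 : log 4 = 2 * log 2 := by
    rw [show (4 : ℝ) = 2 ^ 2 by norm_num, log_pow, Nat.cast_ofNat]
  rw [lt_div_iff₀ (log_pos hη)]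
  linarith [log_lt_log (by linarith) hη4]

theorem rpow_log_two_div_log {η n : ℝ} (hn : 0 < n) :
    n ^ (log 2 / log η) = 2 ^ logb η n := by
  rw [rpow_def_of_pos hn, rpow_def_of_pos two_pos, logb]
  ring_nf

theorem exists_pow_le_and_exp_le_two_pow_two_pow {η n : ℝ} (hη : 1 < η) (hn : 1 ≤ n) :
    ∃ k : ℕ, η ^ k ≤ n ∧ exp (log 2 / 2 * n ^ (log 2 / log η)) ≤ 2 ^ 2 ^ k := by
  have hn0 : 0 < n := by linarith
  set k := ⌊logb η n⌋₊
  refine ⟨k, ?_, ?_⟩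
  · rw [← rpow_natCast, ← le_logb_iff_rpow_le hη hn0]
    exact Nat.floor_le (logb_nonneg hη hn)
  · have hk : 2 ^ logb η n ≤ (2 : ℝ) ^ ((k : ℝ) + 1) :=
      rpow_le_rpow_of_exponent_le one_le_two (Nat.lt_floor_add_one _).le
    rw [rpow_add two_pos, rpow_one, rpow_natCast] at hk
    calc exp (log 2 / 2 * n ^ (log 2 / log η))
        ≤ exp (2 ^ k * log 2) := by
          rw [rpow_log_two_div_log hn0]
          gcongr exp ?_
          nlinarith [log_pos one_lt_two]
      _ = 2 ^ 2 ^ k := by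
          rw [← Nat.cast_ofNat (R := ℝ) (n := 2), ← Nat.cast_pow, exp_nat_mul, Nat.cast_ofNat,
            exp_log two_pos]

end Real

theorem Set.Finite.exists_pos_le {α : Type*} {S : Set α} {ω : α → ℝ} (hS : S.Finite)
    (hω : ∀ s ∈ S, 0 < ω s) : ∃ m > 0, ∀ s ∈ S, m ≤ ω s := by
  rcases S.eq_empty_or_nonempty with rfl | hne
  · exact ⟨1, one_pos, by simp⟩
  · obtain ⟨s₀, hs₀, hmin⟩ := Set.exists_min_image S ω hS hne
    exact ⟨ω s₀, hω s₀ hs₀, hmin⟩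

section WordWeight

variable {G : Type*} [Group G] {S : Set G} {ω : G → ℝ}

theorem wordWeight_prod_le (hω : ∀ s ∈ S, 0 ≤ ω s) {l : List G} (hl : ∀ s ∈ l, s ∈ S) :
    wordWeight S ω l.prod ≤ (l.map ω).sum := by
  refine csInf_le ⟨0, ?_⟩ ⟨l, ⟨hl, rfl⟩, rfl⟩
  rintro _ ⟨m, ⟨hm, -⟩, rfl⟩
  exact List.sum_nonneg fun _ hx ↦ by
    obtain ⟨s, hs, rfl⟩ := List.mem_map.1 hx
    exact hω s (hm s hs)

theorem finite_setOf_wordWeight_le (hS : S.Finite) (hgen : Submonoid.closure S = ⊤)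
    (hω : ∀ s ∈ S, 0 < ω s) (x : ℝ) : {g | wordWeight S ω g ≤ x}.Finite := by
  have := hS.to_subtype
  obtain ⟨m, hm, hmS⟩ := hS.exists_pos_le hω
  refine ((List.finite_length_le S ⌈x / m + 1⌉₊).image fun l ↦ (l.map (↑)).prod).subset ?_
  intro g hg
  have hne : ((fun l : List G ↦ (l.map ω).sum) ''
      {l | (∀ s ∈ l, s ∈ S) ∧ l.prod = g}).Nonempty := by
    obtain ⟨l, hl, rfl⟩ := Submonoid.exists_list_of_mem_closure (hgen ▸ Submonoid.mem_top g)
    exact ⟨_, ⟨l, ⟨hl, rfl⟩, rfl⟩⟩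
  obtain ⟨_, ⟨l, ⟨hl, rfl⟩, rfl⟩, hlt⟩ := Real.lt_sInf_add_pos hne hm
  lift l to List S using hl
  refine ⟨l, ?_, rfl⟩
  have hlen : (l.length : ℝ) * m ≤ ((l.map (↑)).map ω).sum := by
    simpa using List.sum_le_sum (l := l) (f := fun _ ↦ m) (g := fun s ↦ ω s)
      fun s _ ↦ hmS s s.2
  have : (l.length : ℝ) ≤ x / m + 1 := by
    rw [div_add_one hm.ne', le_div_iff₀ hm]
    exact hlen.trans (hlt.trans_le (by simpa [wordWeight] using hg)).le
  exact Nat.cast_le.1 (this.trans (Nat.le_ceil _))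

theorem wordWeight_one_nonpos (hω : ∀ s ∈ S, 0 ≤ ω s) : wordWeight S ω 1 ≤ 0 := by
  simpa using wordWeight_prod_le hω (l := []) (by simp)

theorem card_le_growth (hS : S.Finite) (hgen : Submonoid.closure S = ⊤)
    (hω : ∀ s ∈ S, 0 < ω s) {x : ℝ} {F : Finset G} (hF : ∀ g ∈ F, wordWeight S ω g ≤ x) :
    F.card ≤ growth S ω x := by
  rw [growth, Nat.card_coe_set_eq, ← Set.ncard_coe_finset]
  exact Set.ncard_le_ncard (fun g hg ↦ hF g hg) (finite_setOf_wordWeight_le hS hgen hω x)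

end WordWeight

section Doubling

variable {α β : Type*} {ι : β → α} {ψ : β → α × α} {N : Set α} {W : α → ℝ} {η K : ℝ}

theorem exists_finset_card_sq_of_split (hι : ι.Injective) (hη : 0 ≤ η)
    (hW : ∀ z, W (ι z) ≤ η * max (W (ψ z).1) (W (ψ z).2) + K)
    (hN : ∀ p ∈ N ×ˢ N, ∃ z, ι z ∈ N ∧ ψ z = p) {F : Finset α} (hFN : ↑F ⊆ N) {x : ℝ}
    (hFW : ∀ g ∈ F, W g ≤ x) :
    ∃ F' : Finset α, F'.card = F.card ^ 2 ∧ ↑F' ⊆ N ∧ ∀ g ∈ F', W g ≤ η * x + K := by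
  classical
  choose z hzN hψz using hN
  have hFF : ∀ p ∈ F ×ˢ F, p ∈ N ×ˢ N := fun p hp ↦ by
    rw [Finset.mem_product] at hp
    exact ⟨hFN hp.1, hFN hp.2⟩
  let lift : F ×ˢ F → α := fun p ↦ ι (z p (hFF p p.2))
  have hlift : lift.Injective := fun p q hpq ↦ by
    simpa [hψz] using congrArg ψ (hι hpq)
  refine ⟨Finset.univ.image lift, ?_, ?_, ?_⟩
  · rw [Finset.card_image_of_injective _ hlift, Finset.card_univ, Fintype.card_coe,
      Finset.card_product, sq]
  · intro g hg
    obtain ⟨p, -, rfl⟩ := Finset.mem_image.1 hg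
    exact hzN p (hFF p p.2)
  · simp only [Finset.mem_image, Finset.mem_univ, true_and, forall_exists_index]
    rintro _ p rfl
    obtain ⟨h₁, h₂⟩ := Finset.mem_product.1 p.2
    calc W (lift p) ≤ η * max (W (ψ _).1) (W (ψ _).2) + K := hW _
      _ ≤ η * x + K := by
        rw [hψz]
        gcongr
        exact max_le (hFW _ h₁) (hFW _ h₂)

theorem exists_finset_card_pow_two_pow_of_split (hι : ι.Injective) (hη : 0 ≤ η)
    (hW : ∀ z, W (ι z) ≤ η * max (W (ψ z).1) (W (ψ z).2) + K)
    (hN : ∀ p ∈ N ×ˢ N, ∃ z, ι z ∈ N ∧ ψ z = p) {A B : ℝ} (hB : K = (η - 1) * B)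
    {F₀ : Finset α} (hF₀N : ↑F₀ ⊆ N) (hF₀W : ∀ g ∈ F₀, W g ≤ A - B) (k : ℕ) :
    ∃ F : Finset α, F.card = F₀.card ^ 2 ^ k ∧ ↑F ⊆ N ∧ ∀ g ∈ F, W g ≤ A * η ^ k - B := by
  induction k with
  | zero => exact ⟨F₀, by simp, hF₀N, by simpa using hF₀W⟩
  | succ k ih =>
    obtain ⟨F, hcard, hFN, hFW⟩ := ih
    obtain ⟨F', hcard', hF'N, hF'W⟩ := exists_finset_card_sq_of_split hι hη hW hN hFN hFW
    refine ⟨F', by rw [hcard', hcard, ← pow_mul, pow_succ], hF'N, fun g hg ↦ ?_⟩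
    calc W g ≤ η * (A * η ^ k - B) + K := hF'W g hg
      _ = A * η ^ (k + 1) - B := by rw [hB]; ring

end Doubling

section NormalClosure

variable {G L : Type*} [Group G] [Group L] {ψ : L →* G × G} {N : Subgroup L} [N.Normal] {t g : G}

theorem one_mk_mem_map_of_mem_normalClosure (hψ : Function.Surjective fun z ↦ (ψ z).2)
    (ht : (1, t) ∈ N.map ψ) (hg : g ∈ Subgroup.normalClosure {t}) : (1, g) ∈ N.map ψ := by
  have : ((N.map ψ).comap (MonoidHom.inr G G)).Normal := by
    refine ⟨fun g hg c ↦ ?_⟩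
    obtain ⟨z, hz⟩ := hψ c
    obtain ⟨n, hn, hψn⟩ := hg
    refine ⟨z * n * z⁻¹, Subgroup.Normal.conj_mem ‹_› n hn z, ?_⟩
    simp only [map_mul, map_inv, hψn, MonoidHom.inr_apply]
    ext <;> simp [hz]
  exact Subgroup.normalClosure_le_normal (N := (N.map ψ).comap (MonoidHom.inr G G))
    (Set.singleton_subset_iff.2 ht) hg

theorem mk_one_mem_map_of_mem_normalClosure (hψ : Function.Surjective fun z ↦ (ψ z).1)
    (ht : (t, 1) ∈ N.map ψ) (hg : g ∈ Subgroup.normalClosure {t}) : (g, 1) ∈ N.map ψ := by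
  let ψ' := (MulEquiv.prodComm : G × G ≃* G × G).toMonoidHom.comp ψ
  have ht' : (1, t) ∈ N.map ψ' := by
    obtain ⟨z, hz, e⟩ := ht
    exact ⟨z, hz, by simp [ψ', e]⟩
  obtain ⟨z, hz, e⟩ := one_mk_mem_map_of_mem_normalClosure (ψ := ψ') hψ ht' hg
  exact ⟨z, hz, by simpa [ψ'] using congrArg Prod.swap e⟩

end NormalClosure

theorem ga_mul_self : ga * ga = 1 := Subtype.ext (Equiv.ext grigA_involutive)
theorem gb_mul_self : gb * gb = 1 := Subtype.ext (Equiv.ext grigB_involutive)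
theorem gc_mul_self : gc * gc = 1 := Subtype.ext (Equiv.ext grigC_involutive)
theorem gd_mul_self : gd * gd = 1 := Subtype.ext (Equiv.ext grigD_involutive)

theorem grigB_grigC_and_grigC_grigD_and_grigD_grigB (l : List Bool) :
    grigB (grigC l) = grigD l ∧ grigC (grigD l) = grigB l ∧ grigD (grigB l) = grigC l := by
  induction l with
  | nil => exact ⟨rfl, rfl, rfl⟩
  | cons x σ ih =>
    cases x <;> simp [grigB, grigC, grigD, grigA_involutive σ, ih.1, ih.2.1, ih.2.2]

theorem gb_mul_gc : gb * gc = gd :=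
  Subtype.ext (Equiv.ext fun l ↦ (grigB_grigC_and_grigC_grigD_and_grigD_grigB l).1)

theorem closure_generators : Subgroup.closure ({ga, gb, gc, gd} : Set Grig) = ⊤ := by
  apply Subgroup.map_injective Grig.subtype_injective
  rw [MonoidHom.map_closure, ← MonoidHom.range_eq_map, Subgroup.range_subtype]
  simp only [Set.image_insert_eq, Set.image_singleton]
  rfl

open Pointwise in
theorem submonoid_closure_generators : Submonoid.closure ({ga, gb, gc, gd} : Set Grig) = ⊤ := by
  have hinv : ({ga, gb, gc, gd} : Set Grig)⁻¹ = {ga, gb, gc, gd} := by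
    simp only [Set.inv_insert, Set.inv_singleton, inv_eq_of_mul_eq_one_right ga_mul_self,
      inv_eq_of_mul_eq_one_right gb_mul_self, inv_eq_of_mul_eq_one_right gc_mul_self,
      inv_eq_of_mul_eq_one_right gd_mul_self]
  have := Subgroup.closure_toSubmonoid ({ga, gb, gc, gd} : Set Grig)
  rwa [hinv, Set.union_self, closure_generators, Subgroup.top_toSubmonoid, eq_comm] at this

def gabab : Grig := ga * gb * ga * gb

def grigK : Subgroup Grig := Subgroup.normalClosure {gabab}

instance : grigK.Normal := Subgroup.normalClosure_normal

theorem gabab_ne_one : gabab ≠ 1 := fun h ↦ by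
  have : ((gabab : Grig) : Equiv.Perm (List Bool)) [false, false] = [false, true] := rfl
  simp [h] at this

theorem gabab_mem_grigK : gabab ∈ grigK := Subgroup.subset_normalClosure rfl

theorem abad_sq_mem_grigK : (ga * gb * ga * gd) * (ga * gb * ga * gd) ∈ grigK := by
  have : (ga * gb * ga * gd) * (ga * gb * ga * gd) = gabab * (gc * gabab * gc⁻¹) := by
    simp only [gabab, ← gb_mul_gc, inv_eq_of_mul_eq_one_right gc_mul_self]
    group
  rw [this]
  exact mul_mem gabab_mem_grigK (Subgroup.normalClosure_normal.conj_mem _ gabab_mem_grigK gc)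

theorem bada_sq_mem_grigK : (gb * (ga * gd * ga)) * (gb * (ga * gd * ga)) ∈ grigK := by
  have : (gb * (ga * gd * ga)) * (gb * (ga * gd * ga)) =
      ga⁻¹ * ((ga * gb * ga * gd) * (ga * gb * ga * gd)) * ga⁻¹⁻¹ := by
    group
  rw [this]
  exact Subgroup.normalClosure_normal.conj_mem _ abad_sq_mem_grigK ga⁻¹

theorem wordWeight_gabab_le {ω : Grig → ℝ} (hω : ∀ s ∈ ({ga, gb, gc, gd} : Set Grig), 0 ≤ ω s) :
    wordWeight ({ga, gb, gc, gd} : Set Grig) ω gabab ≤ 2 * (ω ga + ω gb) := by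
  have := wordWeight_prod_le hω (l := [ga, gb, ga, gb]) (by simp)
  simp only [List.prod_cons, List.prod_nil, mul_one, List.map_cons, List.map_nil, List.sum_cons,
    List.sum_nil, add_zero] at this
  convert this using 1
  · simp only [gabab, mul_assoc]
  · ring

section FirstLevelStabilizer

variable {H : Subgroup Grig} (hH : ∀ g : Grig, g ∈ H ↔ FixesFirst (g : Equiv.Perm (List Bool)))
  {ψ : H →* Grig × Grig} (hψ : PsiProp H ψ)
include hH hψ

theorem exists_mem_psi_eq {g p q : Grig}
    (h₀ : ∀ σ, (g : Equiv.Perm (List Bool)) (false :: σ) = false :: (p : Equiv.Perm (List Bool)) σ)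
    (h₁ : ∀ σ, (g : Equiv.Perm (List Bool)) (true :: σ) = true :: (q : Equiv.Perm (List Bool)) σ) :
    ∃ hg : g ∈ H, ψ ⟨g, hg⟩ = (p, q) := by
  have hg : g ∈ H := (hH g).2 fun x σ ↦ by cases x; exacts [⟨_, h₀ σ⟩, ⟨_, h₁ σ⟩]
  refine ⟨hg, Prod.ext ?_ ?_⟩ <;> refine Subtype.ext (Equiv.ext fun σ ↦ ?_)
  · simpa [h₀] using ((hψ ⟨g, hg⟩ σ).1).symm
  · simpa [h₁] using ((hψ ⟨g, hg⟩ σ).2).symm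

theorem exists_psi_gb : ∃ h : gb ∈ H, ψ ⟨gb, h⟩ = (ga, gc) :=
  exists_mem_psi_eq hH hψ (fun _ ↦ rfl) (fun _ ↦ rfl)
theorem exists_psi_gc : ∃ h : gc ∈ H, ψ ⟨gc, h⟩ = (ga, gd) :=
  exists_mem_psi_eq hH hψ (fun _ ↦ rfl) (fun _ ↦ rfl)
theorem exists_psi_gd : ∃ h : gd ∈ H, ψ ⟨gd, h⟩ = (1, gb) :=
  exists_mem_psi_eq hH hψ (fun _ ↦ rfl) (fun _ ↦ rfl)
theorem exists_psi_aba : ∃ h : ga * gb * ga ∈ H, ψ ⟨_, h⟩ = (gc, ga) :=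
  exists_mem_psi_eq hH hψ (fun _ ↦ rfl) (fun _ ↦ rfl)
theorem exists_psi_aca : ∃ h : ga * gc * ga ∈ H, ψ ⟨_, h⟩ = (gd, ga) :=
  exists_mem_psi_eq hH hψ (fun _ ↦ rfl) (fun _ ↦ rfl)
theorem exists_psi_ada : ∃ h : ga * gd * ga ∈ H, ψ ⟨_, h⟩ = (gb, 1) :=
  exists_mem_psi_eq hH hψ (fun _ ↦ rfl) (fun _ ↦ rfl)

theorem surjective_fst_psi : Function.Surjective fun z ↦ (ψ z).1 := by
  suffices Submonoid.closure {ga, gb, gc, gd} ≤ MonoidHom.mrange ((MonoidHom.fst _ _).comp ψ) by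
    intro g
    exact this (submonoid_closure_generators ▸ Submonoid.mem_top g)
  rw [Submonoid.closure_le]
  rintro _ (rfl | rfl | rfl | rfl)
  · obtain ⟨h, e⟩ := exists_psi_gb hH hψ; exact ⟨⟨_, h⟩, by simp [e]⟩
  · obtain ⟨h, e⟩ := exists_psi_ada hH hψ; exact ⟨⟨_, h⟩, by simp [e]⟩
  · obtain ⟨h, e⟩ := exists_psi_aba hH hψ; exact ⟨⟨_, h⟩, by simp [e]⟩
  · obtain ⟨h, e⟩ := exists_psi_aca hH hψ; exact ⟨⟨_, h⟩, by simp [e]⟩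

theorem surjective_snd_psi : Function.Surjective fun z ↦ (ψ z).2 := by
  suffices Submonoid.closure {ga, gb, gc, gd} ≤ MonoidHom.mrange ((MonoidHom.snd _ _).comp ψ) by
    intro g
    exact this (submonoid_closure_generators ▸ Submonoid.mem_top g)
  rw [Submonoid.closure_le]
  rintro _ (rfl | rfl | rfl | rfl)
  · obtain ⟨h, e⟩ := exists_psi_aba hH hψ; exact ⟨⟨_, h⟩, by simp [e]⟩
  · obtain ⟨h, e⟩ := exists_psi_gd hH hψ; exact ⟨⟨_, h⟩, by simp [e]⟩
  · obtain ⟨h, e⟩ := exists_psi_gb hH hψ; exact ⟨⟨_, h⟩, by simp [e]⟩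
  · obtain ⟨h, e⟩ := exists_psi_gc hH hψ; exact ⟨⟨_, h⟩, by simp [e]⟩

theorem one_gabab_mem_map_psi : (1, gabab) ∈ (grigK.comap H.subtype).map ψ := by
  obtain ⟨haba, eaba⟩ := exists_psi_aba hH hψ
  obtain ⟨hd, ed⟩ := exists_psi_gd hH hψ
  refine ⟨(⟨_, haba⟩ * ⟨gd, hd⟩) * (⟨_, haba⟩ * ⟨gd, hd⟩), abad_sq_mem_grigK, ?_⟩
  rw [map_mul, map_mul, eaba, ed]
  simp [gc_mul_self, gabab, mul_assoc]

theorem gabab_one_mem_map_psi : (gabab, 1) ∈ (grigK.comap H.subtype).map ψ := by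
  obtain ⟨hb, eb⟩ := exists_psi_gb hH hψ
  obtain ⟨hada, eada⟩ := exists_psi_ada hH hψ
  refine ⟨(⟨gb, hb⟩ * ⟨_, hada⟩) * (⟨gb, hb⟩ * ⟨_, hada⟩), bada_sq_mem_grigK, ?_⟩
  rw [map_mul, map_mul, eb, eada]
  simp [gc_mul_self, gabab, mul_assoc]

theorem exists_psi_eq_of_mem_grigK :
    ∀ p ∈ (grigK : Set Grig) ×ˢ (grigK : Set Grig), ∃ z : H, (z : Grig) ∈ grigK ∧ ψ z = p := by
  rintro ⟨g₀, g₁⟩ ⟨h₀, h₁⟩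
  have := mul_mem
    (mk_one_mem_map_of_mem_normalClosure (surjective_fst_psi hH hψ)
      (gabab_one_mem_map_psi hH hψ) h₀)
    (one_mk_mem_map_of_mem_normalClosure (surjective_snd_psi hH hψ)
      (one_gabab_mem_map_psi hH hψ) h₁)
  rwa [Prod.mk_mul_mk, mul_one, one_mul] at this

end FirstLevelStabilizer

/-- If a positive weight `ω` on the generators of the Grigorchuk group satisfies the
contraction `∂_ω(h) ≤ η·max{∂_ω(h₀), ∂_ω(h₁)} + K` on the first-level stabilizer for
some `K ≥ 0` and `1 < η < 4`, then the growth of `G` satisfies `γ(n) ≿ e^{n^α}` with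
`α = log 2 / log η > 1/2`. -/
theorem grigorchuk_growth_lower_bound_of_contraction
    (ω : Grig → ℝ) (hω : ∀ s ∈ ({ga, gb, gc, gd} : Set Grig), 0 < ω s)
    (η K : ℝ) (hη : 1 < η) (hη4 : η < 4) (hK : 0 ≤ K)
    (H : Subgroup Grig)
    (hH : ∀ g : Grig, g ∈ H ↔ FixesFirst (g : Equiv.Perm (List Bool)))
    (ψ : H →* Grig × Grig) (hψ : PsiProp H ψ)
    (hcontr : ∀ h : H,
      wordWeight ({ga, gb, gc, gd} : Set Grig) ω (h : Grig) ≤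
        η * max (wordWeight ({ga, gb, gc, gd} : Set Grig) ω (ψ h).1)
                (wordWeight ({ga, gb, gc, gd} : Set Grig) ω (ψ h).2) + K) :
    1 / 2 < Real.log 2 / Real.log η ∧
    ∃ C : ℝ, 0 < C ∧ ∃ c : ℝ, 0 < c ∧ ∃ n₀ : ℝ, ∀ n : ℝ, n₀ ≤ n →
      Real.exp (c * n ^ (Real.log 2 / Real.log η)) ≤
        growth ({ga, gb, gc, gd} : Set Grig) ω (C * n) := by
  classical
  refine ⟨one_half_lt_log_two_div_log hη hη4, ?_⟩
  have hω₀ : ∀ s ∈ ({ga, gb, gc, gd} : Set Grig), 0 ≤ ω s := fun s hs ↦ (hω s hs).le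
  set B := K / (η - 1)
  set A := 2 * (ω ga + ω gb) + B
  have hB : K = (η - 1) * B := (mul_div_cancel₀ K (by linarith)).symm
  have hB₀ : 0 ≤ B := div_nonneg hK (by linarith)
  have hab : 0 < ω ga + ω gb := add_pos (hω ga (by simp)) (hω gb (by simp))
  have hA : 0 < A := by positivity
  have hF₀ : ∀ g ∈ ({1, gabab} : Finset Grig),
      wordWeight ({ga, gb, gc, gd} : Set Grig) ω g ≤ A - B := by
    simp only [Finset.mem_insert, Finset.mem_singleton, forall_eq_or_imp, forall_eq, A,
      add_sub_cancel_right]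
    exact ⟨(wordWeight_one_nonpos hω₀).trans (by positivity), wordWeight_gabab_le hω₀⟩
  refine ⟨A, hA, Real.log 2 / 2, by positivity, 1, fun n hn ↦ ?_⟩
  obtain ⟨k, hk, hexp⟩ := exists_pow_le_and_exp_le_two_pow_two_pow hη hn
  obtain ⟨F, hcard, -, hFW⟩ := exists_finset_card_pow_two_pow_of_split Subtype.val_injective
    (by linarith) hcontr (exists_psi_eq_of_mem_grigK hH hψ) hB
    (by simp [Set.insert_subset_iff, gabab_mem_grigK, one_mem]) hF₀ k
  have hFn : ∀ g ∈ F, wordWeight ({ga, gb, gc, gd} : Set Grig) ω g ≤ A * n := fun g hg ↦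
    (hFW g hg).trans (by nlinarith)
  calc Real.exp (Real.log 2 / 2 * n ^ (Real.log 2 / Real.log η)) ≤ 2 ^ 2 ^ k := hexp
    _ = F.card := by rw [hcard, Finset.card_pair gabab_ne_one.symm]; push_cast; rfl
    _ ≤ _ := Nat.cast_le.2 (card_le_growth (by simp) submonoid_closure_generators hω hFn)
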